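/- For every s ∈ ℕ there exists C ≥ 1 such that for every m = 0,…,s and every n ∈ ℕ there is an integrable w : ℝ → ℂ with (d/dx)^n [(x−i)^m · e^{−x²}] = ∫_ℝ w(τ)·e^{ixτ} dτ for all x ∈ ℝ and ∫_ℝ |w(τ)| dτ ≤ C^{n+1}·√(n!). That is, the Gaussian x ↦ e^{−x²} belongs to the class 𝓔_s^{1/2} for every s ∈ ℕ. -/

import Mathlib

/-!
With the weight `g(τ) = e^{-τ²/4}` one has `e^{-x²} = (4π)^{-1/2} ∫ g(τ) e^{ixτ} dτ`.
Integrating by parts, multiplication by `x` acts on polynomial weights `P · g` as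
`P ↦ i (P' - τ P / 2)`, so `(x - i)^m e^{-x²} = ∫ Q_m(τ) g(τ) e^{ixτ} dτ` for a polynomial `Q_m`,
and each derivative in `x` multiplies the weight by `iτ`. The `√(n!)` growth comes from
`|τ|^n ≤ √(8^n n!) e^{τ²/16}`, a single term of the exponential series of `τ²/8`, which the
Gaussian decay of the weight absorbs.
-/

noncomputable section

open MeasureTheory Polynomial Complex Real
open scoped Nat

lemma abs_pow_le_sqrt_mul_exp (k : ℕ) (τ : ℝ) :
    |τ| ^ k ≤ √(8 ^ k * k !) * rexp (τ ^ 2 / 16) := by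
  have hseries : (τ ^ 2) ^ k ≤ 8 ^ k * k ! * rexp (τ ^ 2 / 8) := by
    have h := Real.pow_div_factorial_le_exp (x := τ ^ 2 / 8) (by positivity) k
    rwa [div_pow, div_div, div_le_iff₀ (by positivity), mul_comm] at h
  rw [← pow_le_pow_iff_left₀ (by positivity) (by positivity) two_ne_zero, mul_pow,
    Real.sq_sqrt (by positivity), ← Real.exp_nat_mul, ← pow_mul, mul_comm k 2, pow_mul, sq_abs]
  refine hseries.trans_eq ?_
  congr 2
  norm_num
  ring

lemma Polynomial.exists_norm_eval_le_mul_exp (P : ℂ[X]) :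
    ∃ B ≥ 0, ∀ τ : ℝ, ‖P.eval (τ : ℂ)‖ ≤ B * rexp (τ ^ 2 / 16) := by
  induction P using Polynomial.induction_on' with
  | add p q hp hq =>
    obtain ⟨B₁, hB₁, h₁⟩ := hp
    obtain ⟨B₂, hB₂, h₂⟩ := hq
    refine ⟨B₁ + B₂, by positivity, fun τ => ?_⟩
    rw [eval_add, add_mul]
    exact (norm_add_le _ _).trans (add_le_add (h₁ τ) (h₂ τ))
  | monomial k a =>
    refine ⟨‖a‖ * √(8 ^ k * k !), by positivity, fun τ => ?_⟩
    rw [eval_monomial, norm_mul, norm_pow, Complex.norm_real, Real.norm_eq_abs, mul_assoc]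
    exact mul_le_mul_of_nonneg_left (abs_pow_le_sqrt_mul_exp k τ) (norm_nonneg a)

def polyGauss (P : ℂ[X]) (τ : ℝ) : ℂ := P.eval (τ : ℂ) * cexp (-(1 / 4) * (τ : ℂ) ^ 2)

lemma norm_polyGauss (P : ℂ[X]) (τ : ℝ) :
    ‖polyGauss P τ‖ = ‖P.eval (τ : ℂ)‖ * rexp (-(1 / 4) * τ ^ 2) := by
  rw [polyGauss, norm_mul, Complex.norm_exp]
  congr 2
  simp [← Complex.ofReal_pow]

lemma continuous_polyGauss (P : ℂ[X]) : Continuous (polyGauss P) := by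
  unfold polyGauss
  fun_prop

lemma exists_norm_polyGauss_le (P : ℂ[X]) :
    ∃ B ≥ 0, ∀ τ : ℝ, ‖polyGauss P τ‖ ≤ B * rexp (-(3 / 16) * τ ^ 2) := by
  obtain ⟨B, hB0, hB⟩ := P.exists_norm_eval_le_mul_exp
  refine ⟨B, hB0, fun τ => ?_⟩
  calc ‖polyGauss P τ‖ ≤ B * rexp (τ ^ 2 / 16) * rexp (-(1 / 4) * τ ^ 2) := by
        rw [norm_polyGauss]; gcongr; exact hB τ
    _ = B * rexp (-(3 / 16) * τ ^ 2) := by rw [mul_assoc, ← Real.exp_add]; ring_nf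

lemma integrable_polyGauss (P : ℂ[X]) : Integrable (polyGauss P) := by
  obtain ⟨B, -, hB⟩ := exists_norm_polyGauss_le P
  exact ((integrable_exp_neg_mul_sq (by norm_num)).const_mul B).mono'
    (continuous_polyGauss P).aestronglyMeasurable (.of_forall hB)

lemma norm_cexp_I_mul_mul (x τ : ℝ) : ‖cexp (I * x * τ)‖ = 1 := by
  rw [show I * x * τ = ((x * τ : ℝ) : ℂ) * I by push_cast; ring, norm_exp_ofReal_mul_I]

lemma integrable_polyGauss_mul_cexp (P : ℂ[X]) (x : ℝ) :
    Integrable (fun τ : ℝ => polyGauss P τ * cexp (I * x * τ)) := by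
  refine (integrable_polyGauss P).norm.mono' (by unfold polyGauss; fun_prop)
    (.of_forall fun τ => ?_)
  rw [norm_mul, norm_cexp_I_mul_mul, mul_one]

def polyGaussTransform (P : ℂ[X]) (x : ℝ) : ℂ :=
  ∫ τ : ℝ, polyGauss P τ * cexp (I * x * τ)

lemma polyGaussTransform_C_mul (a : ℂ) (P : ℂ[X]) (x : ℝ) :
    polyGaussTransform (C a * P) x = a * polyGaussTransform P x := by
  rw [polyGaussTransform, polyGaussTransform, ← integral_const_mul]
  simp only [polyGauss, eval_mul, eval_C, mul_assoc]

lemma polyGaussTransform_sub (P Q : ℂ[X]) (x : ℝ) :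
    polyGaussTransform (P - Q) x = polyGaussTransform P x - polyGaussTransform Q x := by
  rw [polyGaussTransform, polyGaussTransform, polyGaussTransform, ← integral_sub
    (integrable_polyGauss_mul_cexp P x) (integrable_polyGauss_mul_cexp Q x)]
  simp only [polyGauss, eval_sub, sub_mul]

lemma polyGaussTransform_C (x : ℝ) :
    polyGaussTransform (C ((π / (1 / 4) : ℂ) ^ (1 / 2 : ℂ))⁻¹) x = cexp (-(x : ℂ) ^ 2) := by
  set c : ℂ := (π / (1 / 4) : ℂ) ^ (1 / 2 : ℂ)
  have hc : c ≠ 0 := by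
    rw [Ne, Complex.cpow_eq_zero_iff]
    simp [Real.pi_ne_zero]
  have hint : (fun τ : ℝ => polyGauss (C c⁻¹) τ * cexp (I * x * τ))
      = fun τ : ℝ => c⁻¹ * (cexp (I * x * τ) * cexp (-(1 / 4) * (τ : ℂ) ^ 2)) := by
    funext τ
    simp only [polyGauss, eval_C]
    ring
  rw [polyGaussTransform, hint, integral_const_mul,
    fourierIntegral_gaussian (by norm_num) (x : ℂ), inv_mul_cancel_left₀ hc]
  ring_nf

lemma hasDerivAt_polyGaussTransform (P : ℂ[X]) (x : ℝ) :
    HasDerivAt (polyGaussTransform P) (polyGaussTransform (C I * X * P) x) x := by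
  have hF' : ∀ y τ : ℝ, polyGauss P τ * (I * τ * cexp (I * y * τ))
      = polyGauss (C I * X * P) τ * cexp (I * y * τ) := fun y τ => by
    simp only [polyGauss, eval_mul, eval_C, eval_X]
    ring
  have hderiv := hasDerivAt_integral_of_dominated_loc_of_deriv_le (x₀ := x)
    (F := fun (y τ : ℝ) => polyGauss P τ * cexp (I * y * τ))
    (F' := fun (y τ : ℝ) => polyGauss P τ * (I * τ * cexp (I * y * τ)))
    (bound := fun τ => ‖polyGauss (C I * X * P) τ‖) Filter.univ_mem
    (.of_forall fun y => (integrable_polyGauss_mul_cexp P y).aestronglyMeasurable)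
    (integrable_polyGauss_mul_cexp P x)
    (by simp_rw [hF']; exact (integrable_polyGauss_mul_cexp _ x).aestronglyMeasurable)
    (.of_forall fun τ y _ => by rw [hF', norm_mul, norm_cexp_I_mul_mul, mul_one])
    (integrable_polyGauss _).norm
    (.of_forall fun τ y _ => ?_)
  · simp only [hF'] at hderiv
    exact hderiv.2
  · have h : HasDerivAt (fun y : ℝ => I * y * τ) (I * 1 * τ) y :=
      ((hasDerivAt_id y).ofReal_comp.const_mul I).mul_const (τ : ℂ)
    exact (h.cexp.const_mul _).congr_deriv (by ring)

lemma iteratedDeriv_polyGaussTransform (n : ℕ) (P : ℂ[X]) :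
    iteratedDeriv n (polyGaussTransform P) = polyGaussTransform ((C I * X) ^ n * P) := by
  induction n with
  | zero => simp
  | succ n ih =>
    ext x
    rw [iteratedDeriv_succ, ih, (hasDerivAt_polyGaussTransform _ x).deriv, pow_succ',
      mul_assoc (C I * X)]

def polyGaussDeriv (P : ℂ[X]) : ℂ[X] := derivative P - C (1 / 2) * X * P

lemma hasDerivAt_polyGauss (P : ℂ[X]) (τ : ℝ) :
    HasDerivAt (polyGauss P) (polyGauss (polyGaussDeriv P) τ) τ := by
  have hP : HasDerivAt (fun t : ℝ => P.eval (t : ℂ)) ((derivative P).eval (τ : ℂ)) τ :=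
    (P.hasDerivAt (τ : ℂ)).comp_ofReal
  have hg := (((hasDerivAt_id τ).ofReal_comp.pow 2).const_mul (-(1 / 4) : ℂ)).cexp
  refine (hP.mul hg).congr_deriv ?_
  simp only [polyGauss, polyGaussDeriv, eval_sub, eval_mul, eval_C, eval_X, Pi.pow_apply, id,
    ofReal_one]
  ring

lemma ofReal_mul_polyGaussTransform (P : ℂ[X]) (x : ℝ) :
    x * polyGaussTransform P x = polyGaussTransform (C I * polyGaussDeriv P) x := by
  have he : ∀ τ : ℝ, HasDerivAt (fun t : ℝ => cexp (I * x * t)) (I * x * cexp (I * x * τ)) τ :=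
    fun τ => by
      have h : HasDerivAt (fun t : ℝ => I * x * t) (I * x * 1) τ :=
        (hasDerivAt_id τ).ofReal_comp.const_mul _
      exact h.cexp.congr_deriv (by ring)
  have hint : Integrable fun τ : ℝ => polyGauss P τ * (I * x * cexp (I * x * τ)) := by
    simpa only [mul_left_comm] using (integrable_polyGauss_mul_cexp P x).const_mul (I * x)
  have hzero := integral_eq_zero_of_hasDerivAt_of_integrable
    (fun τ => (hasDerivAt_polyGauss P τ).mul (he τ))
    ((integrable_polyGauss_mul_cexp _ x).add hint) (integrable_polyGauss_mul_cexp P x)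
  rw [integral_add (integrable_polyGauss_mul_cexp _ x) hint] at hzero
  simp_rw [mul_left_comm (polyGauss P _), integral_const_mul] at hzero
  change polyGaussTransform (polyGaussDeriv P) x + I * x * polyGaussTransform P x = 0 at hzero
  rw [polyGaussTransform_C_mul]
  linear_combination (-I) * hzero + x * polyGaussTransform P x * I_sq

def weightPoly : ℕ → ℂ[X]
  | 0 => C ((π / (1 / 4) : ℂ) ^ (1 / 2 : ℂ))⁻¹
  | m + 1 => C I * polyGaussDeriv (weightPoly m) - C I * weightPoly m

lemma polyGaussTransform_weightPoly (m : ℕ) :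
    polyGaussTransform (weightPoly m) = fun x : ℝ => ((x : ℂ) - I) ^ m * cexp (-(x : ℂ) ^ 2) := by
  ext x
  induction m with
  | zero => simpa [weightPoly] using polyGaussTransform_C x
  | succ m ih =>
    rw [weightPoly, polyGaussTransform_sub, ← ofReal_mul_polyGaussTransform,
      polyGaussTransform_C_mul, ih]
    ring

lemma integral_norm_polyGauss_X_pow_mul_le {P : ℂ[X]} {B : ℝ} (hB0 : 0 ≤ B)
    (hB : ∀ τ : ℝ, ‖polyGauss P τ‖ ≤ B * rexp (-(3 / 16) * τ ^ 2)) (n : ℕ) :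
    ∫ τ : ℝ, ‖polyGauss ((C I * X) ^ n * P) τ‖ ≤ (8 * (1 + 6 * B)) ^ (n + 1) * √(n !) := by
  have hpt (τ : ℝ) : ‖polyGauss ((C I * X) ^ n * P) τ‖
      ≤ B * √(8 ^ n * n !) * rexp (-(1 / 8) * τ ^ 2) := by
    have hnorm : ‖polyGauss ((C I * X) ^ n * P) τ‖ = |τ| ^ n * ‖polyGauss P τ‖ := by
      simp [polyGauss, mul_assoc]
    calc ‖polyGauss ((C I * X) ^ n * P) τ‖
        ≤ √(8 ^ n * n !) * rexp (τ ^ 2 / 16) * (B * rexp (-(3 / 16) * τ ^ 2)) := by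
          rw [hnorm]
          exact mul_le_mul (abs_pow_le_sqrt_mul_exp n τ) (hB τ) (norm_nonneg _) (by positivity)
      _ = B * √(8 ^ n * n !) * rexp (-(1 / 8) * τ ^ 2) := by
          rw [mul_mul_mul_comm, ← Real.exp_add]
          ring_nf
  have hsqrt : √(8 ^ n * n !) ≤ 8 ^ n * √(n !) := by
    rw [Real.sqrt_mul (by positivity)]
    gcongr
    exact Real.sqrt_le_self_iff.mpr (.inr (one_le_pow₀ (by norm_num)))
  have hpi : √(π / (1 / 8)) ≤ 6 := by
    rw [Real.sqrt_le_left (by norm_num)]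
    nlinarith [Real.pi_le_four]
  calc ∫ τ : ℝ, ‖polyGauss ((C I * X) ^ n * P) τ‖
      ≤ ∫ τ : ℝ, B * √(8 ^ n * n !) * rexp (-(1 / 8) * τ ^ 2) :=
        integral_mono (integrable_polyGauss _).norm
          ((integrable_exp_neg_mul_sq (by norm_num)).const_mul _) hpt
    _ = B * √(8 ^ n * n !) * √(π / (1 / 8)) := by rw [integral_const_mul, integral_gaussian]
    _ ≤ B * (8 ^ n * √(n !)) * 6 := by gcongr
    _ = 6 * B * 8 ^ n * √(n !) := by ring
    _ ≤ (1 + 6 * B) ^ (n + 1) * 8 ^ (n + 1) * √(n !) := by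
        gcongr
        · calc 6 * B ≤ 1 + 6 * B := by linarith
            _ ≤ (1 + 6 * B) ^ (n + 1) := le_self_pow₀ (by linarith) n.succ_ne_zero
        · norm_num
        · omega
    _ = (8 * (1 + 6 * B)) ^ (n + 1) * √(n !) := by rw [mul_pow]; ring

end

open MeasureTheory

theorem stmt7 (s : ℕ) :
    ∃ C : ℝ, 1 ≤ C ∧ ∀ m ≤ s, ∀ n : ℕ, ∃ w : ℝ → ℂ, Integrable w ∧
      (∀ x : ℝ, iteratedDeriv n
          (fun y : ℝ => ((y : ℂ) - Complex.I) ^ m * Complex.exp (-(y : ℂ) ^ 2)) x =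
        ∫ τ : ℝ, w τ * Complex.exp (Complex.I * x * τ)) ∧
      (∫ τ : ℝ, ‖w τ‖) ≤ C ^ (n + 1) * Real.sqrt n.factorial := by
  choose B hB0 hB using fun m => exists_norm_polyGauss_le (weightPoly m)
  set B' := ∑ m ∈ Finset.range (s + 1), B m
  have hB'0 : 0 ≤ B' := Finset.sum_nonneg fun m _ => hB0 m
  refine ⟨8 * (1 + 6 * B'), by linarith, fun m hm n =>
    ⟨polyGauss ((Polynomial.C Complex.I * Polynomial.X) ^ n * weightPoly m),
      integrable_polyGauss _, fun x => ?_, ?_⟩⟩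
  · rw [← polyGaussTransform_weightPoly, iteratedDeriv_polyGaussTransform]
    rfl
  · have hBm : B m ≤ B' :=
      Finset.single_le_sum (fun m _ => hB0 m) (Finset.mem_range_succ_iff.mpr hm)
    exact integral_norm_polyGauss_X_pow_mul_le hB'0
      (fun τ => (hB m τ).trans (by gcongr)) n
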